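/- arXiv:1202.5417 — 6 statements merged into one kernel-verified Lean document; each statement's English description precedes it below -/
import Mathlib

section
/- Let L be a first-order language with no relation symbols and let H be an L-structure which is free of finite rank: there is n and a family e : Fin n → H such that the L-substructure generated by the range of e is all of H and every function f : Fin n → H extends to a unique L-homomorphism H → H sending each e i to f i. If H is weakly homogeneous, then H is logically perfect: for every k and every pair of tuples a, b : Fin k → H having the same type, there is an L-automorphism ψ of H with ψ (a i) = b i for all i. -/
open FirstOrder Language

/-- Two tuples have the same type if they realize exactly the same first-order formulas. -/
def SameType (L : FirstOrder.Language) {H : Type*} [L.Structure H] {k : ℕ}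
    (a b : Fin k → H) : Prop :=
  ∀ φ : L.Formula (Fin k), φ.Realize a ↔ φ.Realize b

/-- An `L`-structure `H` is weakly homogeneous if every isomorphism between finitely
generated substructures of `H` that extends, together with its inverse, to
endomorphisms of `H`, extends to an automorphism of `H`. -/
def WeaklyHomogeneous (L : FirstOrder.Language) (H : Type*) [L.Structure H] : Prop :=
  ∀ (A B : L.Substructure H), A.FG → B.FG →
    ∀ φ : L.Equiv A B,
      (∃ σ : L.Hom H H, ∀ x : A, σ (x : H) = (φ x : H)) →
      (∃ τ : L.Hom H H, ∀ y : B, τ (y : H) = (φ.symm y : H)) →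
      ∃ Φ : L.Equiv H H, ∀ x : A, Φ (x : H) = (φ x : H)

/-!
If `a` and `b` have the same type in a structure freely generated by `e`, write each `a i` as a
term `tᵢ(e)`. The formula `∃ y, ⋀ᵢ xᵢ = tᵢ(y)` holds of `a`, hence of `b`, and freeness turns a
witness `y` for `b` into an endomorphism `σ` with `σ ∘ a = b`; symmetrically there is `τ` with
`τ ∘ b = a`. Then `σ` and `τ` restrict to mutually inverse isomorphisms between the substructures
generated by `a` and by `b`, and weak homogeneity extends this isomorphism to an automorphism.
-/

open Set

theorem SameType.symm {L : Language} {M : Type*} [L.Structure M] {k : ℕ} {a b : Fin k → M}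
    (h : SameType L a b) : SameType L b a :=
  fun φ => (h φ).symm

namespace FirstOrder.Language

variable {L : Language} {M N : Type*} [L.Structure M] [L.Structure N]

theorem Substructure.exists_term_realize_eq_of_mem_closure_range {n : ℕ} {e : Fin n → M} {x : M}
    (hx : x ∈ Substructure.closure L (Set.range e)) : ∃ t : L.Term (Fin n), t.realize e = x := by
  obtain ⟨t, rfl⟩ := Substructure.mem_closure_iff_exists_term.1 hx
  refine ⟨t.relabel (rangeSplitting e), ?_⟩
  rw [Term.realize_relabel, show e ∘ rangeSplitting e = Subtype.val from
    funext (apply_rangeSplitting e)]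

noncomputable def Formula.termTupleImage {k n : ℕ} (t : Fin k → L.Term (Fin n)) :
    L.Formula (Fin k) :=
  (BoundedFormula.iInf fun i => (Term.var (Sum.inl i)).bdEqual ((t i).relabel Sum.inr)).exs

@[simp]
theorem Formula.realize_termTupleImage {k n : ℕ} (t : Fin k → L.Term (Fin n)) (c : Fin k → M) :
    (Formula.termTupleImage t).Realize c ↔ ∃ y : Fin n → M, ∀ i, c i = (t i).realize y := by
  rw [Formula.termTupleImage, BoundedFormula.realize_exs]
  simp [Term.realize_relabel, Sum.elim_comp_inr]

theorem exists_hom_apply_eq_of_sameType {n : ℕ} {e : Fin n → M}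
    (hgen : Substructure.closure L (Set.range e) = ⊤)
    (hext : ∀ f : Fin n → M, ∃ ψ : L.Hom M M, ∀ i, ψ (e i) = f i)
    {k : ℕ} {a b : Fin k → M} (hab : SameType L a b) :
    ∃ σ : L.Hom M M, ∀ i, σ (a i) = b i := by
  choose t ht using fun i =>
    Substructure.exists_term_realize_eq_of_mem_closure_range (hgen ▸ Substructure.mem_top (a i))
  have ha : (Formula.termTupleImage t).Realize a :=
    (Formula.realize_termTupleImage t a).2 ⟨e, fun i => (ht i).symm⟩
  obtain ⟨y, hy⟩ := (Formula.realize_termTupleImage t b).1 ((hab _).1 ha)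
  obtain ⟨σ, hσ⟩ := hext y
  refine ⟨σ, fun i => ?_⟩
  rw [← ht i, ← HomClass.realize_term, show ⇑σ ∘ e = y from funext hσ, hy i]

section ClosureRange

variable {k : ℕ} {a : Fin k → M} {b : Fin k → N}

theorem Hom.map_closure_range_le (σ : L.Hom M N) (hσ : ∀ i, σ (a i) = b i) :
    (Substructure.closure L (Set.range a)).map σ ≤ Substructure.closure L (Set.range b) := by
  rw [Substructure.map_closure, ← Set.range_comp, show ⇑σ ∘ a = b from funext hσ]

theorem Hom.comp_eqOn_closure_range (σ : L.Hom M N) (τ : L.Hom N M)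
    (hσ : ∀ i, σ (a i) = b i) (hτ : ∀ i, τ (b i) = a i) :
    EqOn (τ.comp σ) (Hom.id L M) (Substructure.closure L (Set.range a)) :=
  Hom.eqOn_closure (by rintro _ ⟨i, rfl⟩; simp [hσ i, hτ i])

def Hom.equivClosureRange (σ : L.Hom M N) (τ : L.Hom N M)
    (hσ : ∀ i, σ (a i) = b i) (hτ : ∀ i, τ (b i) = a i) :
    L.Equiv (Substructure.closure L (Set.range a)) (Substructure.closure L (Set.range b)) where
  toFun x := ⟨σ x, σ.map_closure_range_le hσ ⟨x, x.2, rfl⟩⟩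
  invFun y := ⟨τ y, τ.map_closure_range_le hτ ⟨y, y.2, rfl⟩⟩
  left_inv x := Subtype.ext (σ.comp_eqOn_closure_range τ hσ hτ x.2)
  right_inv y := Subtype.ext (τ.comp_eqOn_closure_range σ hτ hσ y.2)
  map_fun' f x := Subtype.ext (σ.map_fun f _)
  -- `σ` preserves relations and `τ` carries the image back, so relations are reflected too.
  map_rel' r x := by
    change Structure.RelMap r (fun i => σ (x i : M)) ↔ Structure.RelMap r (fun i => (x i : M))
    refine ⟨fun h => ?_, σ.map_rel r _⟩
    have hτσ := τ.map_rel r _ h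
    rwa [show (τ ∘ fun i => σ (x i : M)) = fun i => (x i : M) from
      funext fun i => σ.comp_eqOn_closure_range τ hσ hτ (x i).2] at hτσ

end ClosureRange

end FirstOrder.Language

theorem weaklyHomogeneous_free_is_logically_perfect_general
    {L : FirstOrder.Language} {H : Type*} [L.Structure H]
    -- `H` is a free structure of finite rank:
    (hfree : ∃ (n : ℕ) (e : Fin n → H),
      Substructure.closure L (Set.range e) = ⊤ ∧
        ∀ f : Fin n → H, ∃! ψ : L.Hom H H, ∀ i, ψ (e i) = f i)
    (hwh : WeaklyHomogeneous L H) :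
    ∀ (k : ℕ) (a b : Fin k → H), SameType L a b →
      ∃ ψ : L.Equiv H H, ∀ i, ψ (a i) = b i := by
  obtain ⟨n, e, hgen, hext⟩ := hfree
  intro k a b hab
  obtain ⟨σ, hσ⟩ := exists_hom_apply_eq_of_sameType hgen (fun f => (hext f).exists) hab
  obtain ⟨τ, hτ⟩ := exists_hom_apply_eq_of_sameType hgen (fun f => (hext f).exists) hab.symm
  obtain ⟨Φ, hΦ⟩ := hwh _ _ (Substructure.fg_closure (finite_range a))
    (Substructure.fg_closure (finite_range b)) (σ.equivClosureRange τ hσ hτ)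
    ⟨σ, fun _ => rfl⟩ ⟨τ, fun _ => rfl⟩
  exact ⟨Φ, fun i => (hΦ ⟨a i, Substructure.subset_closure ⟨i, rfl⟩⟩).trans (hσ i)⟩

theorem weaklyHomogeneous_free_is_logically_perfect
    {L : FirstOrder.Language} [L.IsAlgebraic] {H : Type*} [L.Structure H]
    -- `H` is a free structure of finite rank:
    (hfree : ∃ (n : ℕ) (e : Fin n → H),
      Substructure.closure L (Set.range e) = ⊤ ∧
        ∀ f : Fin n → H, ∃! ψ : L.Hom H H, ∀ i, ψ (e i) = f i)
    (hwh : WeaklyHomogeneous L H) :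
    ∀ (k : ℕ) (a b : Fin k → H), SameType L a b →
      ∃ ψ : L.Equiv H H, ∀ i, ψ (a i) = b i :=
  weaklyHomogeneous_free_is_logically_perfect_general hfree hwh
end

section
/- Let G and F be free abelian groups of the same finite rank n (for instance G = F = (Fin n → ℤ), or ℤ-modules each equipped with a basis indexed by Fin n). Let A be a subgroup of G, B a subgroup of F, and φ : A ≃+ B an isomorphism of groups. If there exist additive group homomorphisms σ : G →+ F and τ : F →+ G such that σ agrees with φ on A and τ agrees with φ⁻¹ on B, then there exists an additive group isomorphism ψ : G ≃+ F that agrees with φ on A. In particular, every finitely generated free abelian group is weakly homogeneous. -/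
/-!
Since `τσ` fixes `A`, the subgroup `A` lies in the fixed locus `E = ker (τσ - 1)`, which `σ` maps
isomorphically onto `E' = ker (στ - 1)`, with inverse `τ`. The quotient `G ⧸ E` is isomorphic to
the range of `τσ - 1`, a subgroup of a free group of finite rank, hence free; so
`G ≅ E × range (τσ - 1)`, and likewise `F ≅ E' × range (στ - 1)`. As `E ≅ E'` and `G`, `F` have
the same rank, the two complements are free of equal rank, hence isomorphic, and gluing gives an
isomorphism `G ≅ F` that agrees with `σ`, hence with `φ`, on `E ⊇ A`.
-/

open Module LinearMap

namespace LinearMap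

variable {R M N : Type*} [CommRing R] [AddCommGroup M] [AddCommGroup N] [Module R M] [Module R N]

theorem exists_linearEquiv_ker_prod_range (f : M →ₗ[R] N) [Projective R (range f)] :
    ∃ e : M ≃ₗ[R] ker f × range f, ∀ x : ker f, e.symm (x, 0) = x := by
  obtain ⟨s, hs⟩ := projective_lifting_property f.rangeRestrict id f.surjective_rangeRestrict
  have hexact : Function.Exact (ker f).subtype f.rangeRestrict :=
    exact_iff.2 (by rw [ker_rangeRestrict, Submodule.range_subtype])
  obtain ⟨e, he, -⟩ := hexact.splitSurjectiveEquiv (ker f).injective_subtype ⟨s, hs⟩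
  exact ⟨e, fun x => (LinearMap.congr_fun he x).symm⟩

variable (σ : M →ₗ[R] N) (τ : N →ₗ[R] M)

theorem mapsTo_ker_comp_sub_id {x : M} (hx : x ∈ ker (τ ∘ₗ σ - id)) :
    σ x ∈ ker (σ ∘ₗ τ - id) := by
  rw [mem_ker, sub_apply, sub_eq_zero] at hx ⊢
  exact congrArg σ hx

def kerCompSubIdEquiv : ker (τ ∘ₗ σ - id) ≃ₗ[R] ker (σ ∘ₗ τ - id) :=
  .ofLinearMap (σ.restrict fun _ => mapsTo_ker_comp_sub_id σ τ)
    (τ.restrict fun _ => mapsTo_ker_comp_sub_id τ σ)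
    (by ext ⟨y, hy⟩; simpa [sub_eq_zero] using hy)
    (by ext ⟨x, hx⟩; simpa [sub_eq_zero] using hx)

variable {σ τ} in
theorem exists_linearEquiv_eq_on_ker_comp_sub_id [IsDomain R] [IsPrincipalIdealRing R]
    [Free R M] [Module.Finite R M] [Free R N] [Module.Finite R N]
    (h : finrank R M = finrank R N) :
    ∃ ψ : M ≃ₗ[R] N, ∀ x ∈ ker (τ ∘ₗ σ - id), ψ x = σ x := by
  obtain ⟨eM, heM⟩ := exists_linearEquiv_ker_prod_range (τ ∘ₗ σ - id)
  obtain ⟨eN, heN⟩ := exists_linearEquiv_ker_prod_range (σ ∘ₗ τ - id)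
  let e₁ := kerCompSubIdEquiv σ τ
  have hrange : finrank R (range (τ ∘ₗ σ - id)) = finrank R (range (σ ∘ₗ τ - id)) := by
    have hM := eM.finrank_eq.trans finrank_prod
    have hN := eN.finrank_eq.trans finrank_prod
    have hker := e₁.finrank_eq
    omega
  let e₂ := LinearEquiv.ofFinrankEq _ _ hrange
  refine ⟨eM ≪≫ₗ e₁.prodCongr e₂ ≪≫ₗ eN.symm, fun x hx => ?_⟩
  have hx' : eM x = (⟨x, hx⟩, 0) := eM.eq_symm_apply.1 (heM ⟨x, hx⟩).symm
  simp only [LinearEquiv.trans_apply, hx', LinearEquiv.prodCongr_apply, map_zero, heN]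
  rfl

end LinearMap

/-- Finitely generated free abelian groups are weakly homogeneous: if `φ : A ≃+ B` is an
isomorphism between subgroups of free abelian groups `G`, `F` of the same finite rank `n`,
and both `φ` and `φ⁻¹` extend to homomorphisms `G →+ F` and `F →+ G`, then `φ` extends
to an isomorphism `G ≃+ F`. -/
theorem free_abelian_weakly_homogeneous {n : ℕ} {G F : Type*}
    [AddCommGroup G] [AddCommGroup F]
    (bG : Module.Basis (Fin n) ℤ G) (bF : Module.Basis (Fin n) ℤ F)
    (A : AddSubgroup G) (B : AddSubgroup F) (φ : A ≃+ B)
    (σ : G →+ F) (hσ : ∀ a : A, σ (a : G) = (φ a : F))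
    (τ : F →+ G) (hτ : ∀ b : B, τ (b : F) = (φ.symm b : G)) :
    ∃ ψ : G ≃+ F, ∀ a : A, ψ (a : G) = (φ a : F) := by
  have : Free ℤ G := .of_basis bG
  have : Free ℤ F := .of_basis bF
  have : Module.Finite ℤ G := .of_basis bG
  have : Module.Finite ℤ F := .of_basis bF
  have hrank : finrank ℤ G = finrank ℤ F := by
    rw [finrank_eq_card_basis bG, finrank_eq_card_basis bF]
  obtain ⟨ψ, hψ⟩ := exists_linearEquiv_eq_on_ker_comp_sub_id
    (σ := σ.toIntLinearMap) (τ := τ.toIntLinearMap) hrank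
  refine ⟨ψ.toAddEquiv, fun a => ?_⟩
  have ha : (a : G) ∈ ker (τ.toIntLinearMap ∘ₗ σ.toIntLinearMap - LinearMap.id) := by
    simp [hσ, hτ]
  exact (hψ a ha).trans (hσ a)
end

section
/- Let S := FreeSemigroup (Fin k) be the free semigroup on k generators. Let A and B be finitely generated subsemigroups of S and φ : A ≃* B a semigroup isomorphism. If there exist semigroup homomorphisms σ : S →ₙ* S and τ : S →ₙ* S such that σ agrees with φ on A and τ agrees with φ⁻¹ on B, then there exists a semigroup automorphism of S that agrees with φ on A. In other words, every finitely generated free semigroup is weakly homogeneous. -/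
/-!
Endomorphisms of a free semigroup never shorten words. Hence if `τ ∘ σ` fixes a word `w`,
it fixes every letter of `w`, and `σ` must send each such letter to a single letter, injectively
(`τ` recovers it). On a finite alphabet this partial injection extends to a permutation `π`, and
the automorphism induced by `π` agrees with `σ` on every word fixed by `τ ∘ σ`, in particular on
`A`.
-/

/-- A subsemigroup is finitely generated if it is the closure of a finite subset. -/
def Subsemigroup.FG' {S : Type*} [Mul S] (A : Subsemigroup S) : Prop :=
  ∃ s : Finset S, Subsemigroup.closure (s : Set S) = A

namespace FreeSemigroup

variable {α β : Type*}

lemma length_le_length_map (f : FreeSemigroup α →ₙ* FreeSemigroup β) (w : FreeSemigroup α) :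
    w.length ≤ (f w).length := by
  induction w with
  | ih1 x => exact Nat.succ_le_succ (Nat.zero_le _)
  | ih2 x y hx hy =>
    rw [map_mul, length_mul, length_mul]
    exact Nat.add_le_add hx hy

lemma eq_of_head_of_length_eq_one {w : FreeSemigroup α} (h : w.length = 1) : w = of w.head := by
  obtain ⟨x, l⟩ := w
  obtain rfl : l = [] := List.eq_nil_of_length_eq_zero (Nat.succ_injective h)
  rfl

lemma eq_of_head_of_map_eq_of (f : FreeSemigroup α →ₙ* FreeSemigroup β) {w : FreeSemigroup α}
    {x : β} (h : f w = of x) : w = of w.head := by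
  apply eq_of_head_of_length_eq_one
  have := length_le_length_map f w
  rw [h, length_of] at this
  exact le_antisymm this (Nat.succ_le_succ (Nat.zero_le _))

lemma map_of_mul_eq_self {f : FreeSemigroup α →ₙ* FreeSemigroup α} {x : α}
    {w : FreeSemigroup α} (h : f (of x * w) = of x * w) : f (of x) = of x ∧ f w = w := by
  have hlen : (f (of x)).length + (f w).length = 1 + w.length := by
    simpa only [map_mul, length_mul, length_of] using congrArg length h
  have hx : (f (of x)).length = 1 := by
    have := length_le_length_map f (of x)
    have := length_le_length_map f w
    rw [length_of] at *
    omega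
  rw [map_mul, eq_of_head_of_length_eq_one hx] at h
  have hhead := congrArg head h
  have htail := congrArg tail h
  simp only [head_mul, tail_mul, of_head, of_tail, List.nil_append, List.cons.injEq] at hhead htail
  exact ⟨by rw [eq_of_head_of_length_eq_one hx, hhead], FreeSemigroup.ext htail.1 htail.2⟩

def mapEquiv (e : α ≃ β) : FreeSemigroup α ≃* FreeSemigroup β where
  toFun := map e
  invFun := map e.symm
  left_inv w := by induction w <;> simp_all
  right_inv w := by induction w <;> simp_all
  map_mul' := map_mul _

variable [Finite α] (σ τ : FreeSemigroup α →ₙ* FreeSemigroup α)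

lemma exists_perm_of_comp_of_eq_of :
    ∃ π : Equiv.Perm α, ∀ x, τ (σ (of x)) = of x → σ (of x) = of (π x) := by
  classical
  set L : Set α := {x | τ (σ (of x)) = of x}
  set g : α → α := fun x ↦ (σ (of x)).head
  have hσL : ∀ x ∈ L, σ (of x) = of (g x) := fun x hx ↦ eq_of_head_of_map_eq_of τ hx
  have hinj : Set.InjOn g L := by
    intro x hx y hy hxy
    have hoo : of x = of y := by
      rw [← show τ (σ (of x)) = of x from hx, ← show τ (σ (of y)) = of y from hy,
        hσL x hx, hσL y hy, hxy]
    exact congrArg head hoo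
  refine ⟨(Equiv.Set.imageOfInjOn g L hinj).extendSubtype, fun x hx ↦ ?_⟩
  rw [Equiv.extendSubtype_apply_of_mem _ x hx, hσL x hx]
  rfl

lemma exists_perm_map_eq_of_comp_eq_self :
    ∃ π : Equiv.Perm α, ∀ w, τ (σ w) = w → map π w = σ w := by
  obtain ⟨π, hπ⟩ := exists_perm_of_comp_of_eq_of σ τ
  refine ⟨π, fun w ↦ ?_⟩
  induction w with
  | ih1 x => exact fun hx ↦ (hπ x hx).symm
  | ih2 x w _ ihw =>
    intro h
    obtain ⟨hx, hw⟩ := map_of_mul_eq_self (f := τ.comp σ) h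
    rw [map_mul, map_mul, map_of, ← hπ x hx, ihw hw]

end FreeSemigroup

open FreeSemigroup in
theorem free_semigroup_weakly_homogeneous_general {k : ℕ}
    (A B : Subsemigroup (FreeSemigroup (Fin k)))
    (φ : A ≃* B)
    (σ : FreeSemigroup (Fin k) →ₙ* FreeSemigroup (Fin k))
    (hσ : ∀ a : A, σ (a : FreeSemigroup (Fin k)) = (φ a : FreeSemigroup (Fin k)))
    (τ : FreeSemigroup (Fin k) →ₙ* FreeSemigroup (Fin k))
    (hτ : ∀ b : B, τ (b : FreeSemigroup (Fin k)) = (φ.symm b : FreeSemigroup (Fin k))) :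
    ∃ Φ : FreeSemigroup (Fin k) ≃* FreeSemigroup (Fin k),
      ∀ a : A, Φ (a : FreeSemigroup (Fin k)) = (φ a : FreeSemigroup (Fin k)) := by
  obtain ⟨π, hπ⟩ := exists_perm_map_eq_of_comp_eq_self σ τ
  refine ⟨mapEquiv π, fun a ↦ ?_⟩
  rw [← hσ a]
  exact hπ a (by rw [hσ a, hτ (φ a), φ.symm_apply_apply])

/-- Finitely generated free semigroups are weakly homogeneous: if `φ : A ≃* B` is an
isomorphism between finitely generated subsemigroups of the free semigroup
`S = FreeSemigroup (Fin k)`, and both `φ` and `φ⁻¹` extend to semigroup endomorphisms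
of `S`, then `φ` extends to an automorphism of `S`. -/
theorem free_semigroup_weakly_homogeneous {k : ℕ}
    (A B : Subsemigroup (FreeSemigroup (Fin k))) (hA : A.FG') (hB : B.FG')
    (φ : A ≃* B)
    (σ : FreeSemigroup (Fin k) →ₙ* FreeSemigroup (Fin k))
    (hσ : ∀ a : A, σ (a : FreeSemigroup (Fin k)) = (φ a : FreeSemigroup (Fin k)))
    (τ : FreeSemigroup (Fin k) →ₙ* FreeSemigroup (Fin k))
    (hτ : ∀ b : B, τ (b : FreeSemigroup (Fin k)) = (φ.symm b : FreeSemigroup (Fin k))) :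
    ∃ Φ : FreeSemigroup (Fin k) ≃* FreeSemigroup (Fin k),
      ∀ a : A, Φ (a : FreeSemigroup (Fin k)) = (φ a : FreeSemigroup (Fin k)) :=
  free_semigroup_weakly_homogeneous_general A B φ σ hσ τ hτ
end

section
/- Finitely generated free abelian groups are logically perfect: let H := (Fin n → ℤ) be the free abelian group of rank n, regarded as a structure for the language of abelian groups. For every k and every pair of tuples a, b : Fin k → H such that a and b have the same type, there exists an additive group automorphism e : H ≃+ H with e (a i) = b i for all i. -/
/-!
Divisibility statements `∃ y, d • y = ∑ i, c i • x i` are first-order, so `a` and `b` satisfy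
the same ones. Taking `d = 0`, they satisfy the same linear relations, so `a i ↦ b i` defines a
linear map `φ` on `N = span a` which preserves and reflects divisibility in `ℤⁿ`. By the Smith
normal form, `N` has a basis `d i • p i` with `p` part of a basis of `ℤⁿ`. Dividing
`φ (d i • p i)` by `d i` gives a family `q` which again extends to a basis, and an automorphism
sending `p` to `q` extends `φ`.
-/

/-- Function symbols of the first-order language of abelian groups:
a binary addition, a unary negation and a constant zero. -/
inductive AbGroupFunc : ℕ → Type
  | add : AbGroupFunc 2
  | neg : AbGroupFunc 1
  | zero : AbGroupFunc 0

/-- The first-order language of abelian groups. -/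
def LAb : FirstOrder.Language where
  Functions := AbGroupFunc
  Relations := fun _ => Empty

/-- Any additive commutative group is an `LAb`-structure in the obvious way. -/
instance LAb.structureOfAddCommGroup (G : Type*) [AddCommGroup G] :
    LAb.Structure G where
  funMap f x :=
    match f with
    | AbGroupFunc.add => x 0 + x 1
    | AbGroupFunc.neg => -x 0
    | AbGroupFunc.zero => 0
  RelMap r _ := r.elim

namespace LAb

open FirstOrder Language

variable {α : Type*}

def zeroTerm : LAb.Term α := Term.func AbGroupFunc.zero ![]

def addTerm (s t : LAb.Term α) : LAb.Term α := Term.func AbGroupFunc.add ![s, t]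

def negTerm (t : LAb.Term α) : LAb.Term α := Term.func AbGroupFunc.neg ![t]

def nsmulTerm : ℕ → LAb.Term α → LAb.Term α
  | 0, _ => zeroTerm
  | m + 1, t => addTerm (nsmulTerm m t) t

def zsmulTerm : ℤ → LAb.Term α → LAb.Term α
  | .ofNat m, t => nsmulTerm m t
  | .negSucc m, t => negTerm (nsmulTerm (m + 1) t)

def sumTerm : {k : ℕ} → (Fin k → LAb.Term α) → LAb.Term α
  | 0, _ => zeroTerm
  | _ + 1, t => addTerm (t 0) (sumTerm (Fin.tail t))

variable {G : Type*} [AddCommGroup G] (v : α → G)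

@[simp] lemma realize_nsmulTerm (m : ℕ) (t : LAb.Term α) :
    (nsmulTerm m t).realize v = m • t.realize v := by
  induction m with
  | zero => exact (zero_nsmul _).symm
  | succ m ih => simp only [nsmulTerm, succ_nsmul, ← ih]; rfl

@[simp] lemma realize_zsmulTerm (z : ℤ) (t : LAb.Term α) :
    (zsmulTerm z t).realize v = z • t.realize v := by
  cases z with
  | ofNat m => simp [zsmulTerm]
  | negSucc m => simp only [zsmulTerm, negSucc_zsmul, ← realize_nsmulTerm]; rfl

@[simp] lemma realize_sumTerm {k : ℕ} (t : Fin k → LAb.Term α) :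
    (sumTerm t).realize v = ∑ i, (t i).realize v := by
  induction k with
  | zero => rfl
  | succ k ih => simp only [Fin.sum_univ_succ, ← ih]; rfl

def divisibleFormula {k : ℕ} (d : ℤ) (c : Fin k → ℤ) : LAb.Formula (Fin k) :=
  ∃' (zsmulTerm d (&0) =' sumTerm fun i => zsmulTerm (c i) (Term.var (Sum.inl i)))

lemma realize_divisibleFormula {k : ℕ} (d : ℤ) (c : Fin k → ℤ) (a : Fin k → G) :
    (divisibleFormula d c).Realize a ↔ ∃ y : G, d • y = ∑ i, c i • a i := by
  simp [divisibleFormula, Formula.Realize, Fin.snoc]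

end LAb

open Submodule

variable {R M : Type*} [CommRing R] [AddCommGroup M] [Module R M]

-- Over a PID this means that `p` extends to a basis (see `exists_linearEquiv_prod`).
variable (R) in
def IsPureFamily {ι : Type*} [Fintype ι] (p : ι → M) : Prop :=
  ∀ (m : R) (c : ι → R) (x : M), m • x = ∑ i, c i • p i → ∀ i, m ∣ c i

lemma Module.Basis.isPureFamily_comp {ι κ : Type*} [Fintype κ] (b : Module.Basis ι R M)
    {f : κ → ι} (hf : f.Injective) : IsPureFamily R (b ∘ f) := by
  classical
  intro m c x hx i
  refine ⟨b.repr x (f i), ?_⟩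
  simpa [Finsupp.single_apply, hf.eq_iff] using (congrArg (fun y => b.repr y (f i)) hx).symm

namespace IsPureFamily

variable {ι : Type*} [Fintype ι] {p : ι → M}

lemma linearIndependent (hp : IsPureFamily R p) : LinearIndependent R p :=
  Fintype.linearIndependent_iff.mpr fun c hc i =>
    zero_dvd_iff.mp (hp 0 c 0 (by rw [hc, smul_zero]) i)

lemma mem_span_of_smul_mem [IsDomain R] [Module.IsTorsionFree R M] (hp : IsPureFamily R p)
    {m : R} (hm : m ≠ 0) {x : M} (hx : m • x ∈ span R (Set.range p)) :
    x ∈ span R (Set.range p) := by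
  obtain ⟨c, hc⟩ := (mem_span_range_iff_exists_fun R).mp hx
  choose t ht using hp m c x hc.symm
  refine (mem_span_range_iff_exists_fun R).mpr ⟨t, smul_right_injective M hm ?_⟩
  simp only [Finset.smul_sum, smul_smul, ← ht, hc]

variable [IsDomain R] [IsPrincipalIdealRing R] [Module.Finite R M] [Module.IsTorsionFree R M]

lemma free_quotient (hp : IsPureFamily R p) : Module.Free R (M ⧸ span R (Set.range p)) := by
  have : Module.IsTorsionFree R (M ⧸ span R (Set.range p)) := by
    refine .of_smul_eq_zero fun m y hy => or_iff_not_imp_left.mpr fun hm => ?_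
    obtain ⟨x, rfl⟩ := Submodule.Quotient.mk_surjective _ y
    rw [← Quotient.mk_smul, Quotient.mk_eq_zero] at hy
    rw [Quotient.mk_eq_zero]
    exact hp.mem_span_of_smul_mem hm hy
  exact Module.free_of_finite_type_torsion_free'

lemma exists_linearEquiv_prod [DecidableEq ι] (hp : IsPureFamily R p) :
    ∃ e : M ≃ₗ[R] (ι → R) × (M ⧸ span R (Set.range p)), ∀ i, e (p i) = (Pi.single i 1, 0) := by
  have := hp.free_quotient
  obtain ⟨l, hl⟩ := (span R (Set.range p)).mkQ.exists_rightInverse_of_surjective (range_mkQ _)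
  have hexact : Function.Exact (Fintype.linearCombination R p) (span R (Set.range p)).mkQ :=
    LinearMap.exact_iff.mpr (by rw [ker_mkQ, Fintype.range_linearCombination])
  let e := hexact.splitSurjectiveEquiv hp.linearIndependent.fintypeLinearCombination_injective
    ⟨l, hl⟩
  refine ⟨e.1, fun i => ?_⟩
  rw [← e.1.eq_symm_apply]
  simpa using LinearMap.congr_fun e.2.1 (Pi.single i 1)

theorem exists_linearEquiv {q : ι → M} (hp : IsPureFamily R p) (hq : IsPureFamily R q) :
    ∃ e : M ≃ₗ[R] M, ∀ i, e (p i) = q i := by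
  classical
  obtain ⟨ep, hep⟩ := hp.exists_linearEquiv_prod
  obtain ⟨eq, heq⟩ := hq.exists_linearEquiv_prod
  have := hp.free_quotient
  have := hq.free_quotient
  have hrank : Module.finrank R (M ⧸ span R (Set.range p)) =
      Module.finrank R (M ⧸ span R (Set.range q)) := by
    have hp' := ep.finrank_eq
    have hq' := eq.finrank_eq
    rw [Module.finrank_prod] at hp' hq'
    omega
  refine ⟨ep ≪≫ₗ (LinearEquiv.refl R _).prodCongr (.ofFinrankEq _ _ hrank) ≪≫ₗ eq.symm,
    fun i => ?_⟩
  simp [hep, heq, LinearEquiv.symm_apply_eq]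

end IsPureFamily

def PreservesDivisibility {N : Submodule R M} (φ : N →ₗ[R] M) : Prop :=
  ∀ (d : R) (x : N), (∃ y, d • y = (x : M)) ↔ ∃ y, d • y = φ x

namespace PreservesDivisibility

variable [IsDomain R] {N : Submodule R M} {φ : N →ₗ[R] M}

lemma isPureFamily {ι : Type*} [Fintype ι] (hφ : PreservesDivisibility φ) {p q : ι → M}
    (hp : IsPureFamily R p) {d : ι → R} (hd : ∀ i, d i ≠ 0) (hN : ∀ i, d i • p i ∈ N)
    (hq : ∀ i, d i • q i = φ ⟨d i • p i, hN i⟩) : IsPureFamily R q := by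
  classical
  intro m c x hx i
  -- scaling by `L` brings `∑ i, c i • q i` into the image of `φ`
  set L := ∏ j, d j
  have hL : L ≠ 0 := Finset.prod_ne_zero_iff.mpr fun j _ => hd j
  set E : ι → R := fun j => ∏ k ∈ Finset.univ.erase j, d k
  have hcE : ∀ j, c j * E j * d j = L * c j := fun j => by
    rw [mul_assoc, Finset.prod_erase_mul _ _ (Finset.mem_univ j), mul_comm]
  let z : N := ∑ j, (c j * E j) • ⟨d j • p j, hN j⟩
  have hz : (z : M) = ∑ j, (L * c j) • p j := by
    simp only [z, coe_sum, coe_smul, smul_smul, hcE]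
  have hφz : φ z = (L * m) • x := by
    simp only [z, map_sum, map_smul, ← hq, smul_smul, hcE]
    simp only [mul_smul, ← Finset.smul_sum, hx]
  obtain ⟨y, hy⟩ := (hφ (L * m) z).mpr ⟨x, hφz.symm⟩
  rw [hz] at hy
  exact (mul_dvd_mul_iff_left hL).mp (hp _ _ y hy i)

theorem exists_linearEquiv_extension [IsPrincipalIdealRing R] [Module.Free R M]
    [Module.Finite R M] (hφ : PreservesDivisibility φ) :
    ∃ e : M ≃ₗ[R] M, ∀ x : N, e x = φ x := by
  obtain ⟨r, snf⟩ := N.smithNormalForm (Module.Free.chooseBasis R M)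
  have hp := snf.bM.isPureFamily_comp snf.f.injective
  have hd : ∀ i, snf.a i ≠ 0 := fun i ha =>
    snf.bN.ne_zero i (Subtype.ext (by simp [snf.snf, ha]))
  have hN : ∀ i, snf.a i • (snf.bM ∘ snf.f) i ∈ N := fun i => snf.snf i ▸ (snf.bN i).2
  choose q hq using fun i => (hφ (snf.a i) ⟨_, hN i⟩).mp ⟨_, rfl⟩
  obtain ⟨e, he⟩ := hp.exists_linearEquiv (hφ.isPureFamily hp hd hN hq)
  refine ⟨e, LinearMap.congr_fun (snf.bN.ext (f₁ := e.toLinearMap ∘ₗ N.subtype) (f₂ := φ)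
    fun i => ?_)⟩
  have : snf.bN i = ⟨_, hN i⟩ := Subtype.ext (snf.snf i)
  rw [LinearMap.comp_apply, this, ← hq, ← he]
  exact map_smul e _ _

end PreservesDivisibility

theorem exists_linearEquiv_apply_eq_of_divisibility_iff [IsDomain R] [IsPrincipalIdealRing R]
    [Module.Free R M] [Module.Finite R M] {ι : Type*} [Fintype ι] {a b : ι → M}
    (h : ∀ (d : R) (c : ι → R),
      (∃ y, d • y = ∑ i, c i • a i) ↔ ∃ y, d • y = ∑ i, c i • b i) :
    ∃ e : M ≃ₗ[R] M, ∀ i, e (a i) = b i := by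
  classical
  set f := Fintype.linearCombination R a
  set g := Fintype.linearCombination R b
  have hker : LinearMap.ker f ≤ LinearMap.ker g := fun c hc => by
    obtain ⟨y, hy⟩ := (h 0 c).mp ⟨0, by rw [smul_zero]; exact hc.symm⟩
    rw [zero_smul] at hy
    exact hy.symm
  let φ : LinearMap.range f →ₗ[R] M := (LinearMap.ker f).liftQ g hker ∘ₗ f.quotKerEquivRange.symm
  have hφ : ∀ c, φ ⟨f c, LinearMap.mem_range_self f c⟩ = g c := fun c => by simp [φ]
  obtain ⟨e, he⟩ := PreservesDivisibility.exists_linearEquiv_extension (φ := φ) (by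
    rintro d ⟨_, c, rfl⟩
    rw [hφ]
    exact h d c)
  refine ⟨e, fun i => ?_⟩
  simpa [f, g] using (he ⟨f (Pi.single i 1), LinearMap.mem_range_self f _⟩).trans (hφ _)

/-- Finitely generated free abelian groups are logically perfect: any two tuples in
`Fin n → ℤ` with the same first-order type are related by an automorphism. -/
theorem free_abelian_logically_perfect (n k : ℕ) (a b : Fin k → (Fin n → ℤ))
    (h : ∀ φ : LAb.Formula (Fin k), φ.Realize a ↔ φ.Realize b) :
    ∃ e : (Fin n → ℤ) ≃+ (Fin n → ℤ), ∀ i, e (a i) = b i := by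
  obtain ⟨e, he⟩ := exists_linearEquiv_apply_eq_of_divisibility_iff (R := ℤ) fun d c => by
    simpa only [LAb.realize_divisibleFormula] using h (LAb.divisibleFormula d c)
  exact ⟨e.toAddEquiv, he⟩
end

section
/- Let L be a first-order language and let M be a finitely generated L-structure that contains no proper L-substructure isomorphic (as an L-structure) to M itself. Then every L-structure N that is isotyped with M is isomorphic to M as an L-structure. -/
open FirstOrder Language

/-- Two `L`-structures are isotyped if every type of a tuple realized in one of them
is also realized in the other. -/
def Isotyped (L : FirstOrder.Language) (M N : Type*) [L.Structure M] [L.Structure N] :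
    Prop :=
  (∀ (n : ℕ) (a : Fin n → M), ∃ b : Fin n → N,
      ∀ φ : L.Formula (Fin n), φ.Realize a ↔ φ.Realize b) ∧
  (∀ (n : ℕ) (b : Fin n → N), ∃ a : Fin n → M,
      ∀ φ : L.Formula (Fin n), φ.Realize a ↔ φ.Realize b)

/-!
Let `a` generate `M` and let `b` realize the type of `a` in `N`; then `t(a) ↦ t(b)` is a
well-defined embedding `f : M ↪ N`. To see that `c ∈ N` lies in its range, realize the type
of `(b, c)` in `M` by `(a', m)`. Since `a'` has the type of `a`, `t(a) ↦ t(a')` is a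
self-embedding of `M`, hence onto, so `m = t(a')` for some term `t`. The formula
`x_last = t(x_init)` then passes to `(b, c)`, giving `c = t(b) = f(t(a))`.
-/

namespace FirstOrder.Language

variable {L : Language} {M N : Type*} [L.Structure M] [L.Structure N] {n : ℕ}

theorem exists_term_realize_eq {a : Fin n → M}
    (ha : Substructure.closure L (Set.range a) = ⊤) (m : M) :
    ∃ t : L.Term (Fin n), t.realize a = m := by
  obtain ⟨t, ht⟩ := Substructure.mem_closure_iff_exists_term.mp (ha ▸ Substructure.mem_top m)
  refine ⟨t.relabel fun x => x.2.choose, ?_⟩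
  rw [Term.realize_relabel, ← ht]
  exact congrArg t.realize (funext fun x => x.2.choose_spec)

theorem exists_embedding_of_realize_iff {a : Fin n → M} {b : Fin n → N}
    (ha : Substructure.closure L (Set.range a) = ⊤)
    (hab : ∀ φ : L.Formula (Fin n), φ.Realize a ↔ φ.Realize b) :
    ∃ f : M ↪[L] N, ∀ t : L.Term (Fin n), f (t.realize a) = t.realize b := by
  choose term hterm using exists_term_realize_eq ha
  have realize_eq_iff (t s : L.Term (Fin n)) :
      t.realize a = s.realize a ↔ t.realize b = s.realize b := by
    simpa only [Formula.realize_equal] using hab (t.equal s)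
  let F : M → N := fun m => (term m).realize b
  have hF (t : L.Term (Fin n)) : F (t.realize a) = t.realize b :=
    (realize_eq_iff _ t).mp (hterm _)
  have hx {k : ℕ} (x : Fin k → M) : x = fun i => (term (x i)).realize a :=
    funext fun i => (hterm (x i)).symm
  have hFx {k : ℕ} (x : Fin k → M) : F ∘ x = fun i => (term (x i)).realize b :=
    funext fun i => (congrArg F (hterm (x i))).symm.trans (hF _)
  refine ⟨⟨⟨F, fun m m' hmm' => ?_⟩, fun {k} g x => ?_, fun {k} r x => ?_⟩, hF⟩
  · rw [← hterm m, ← hterm m', realize_eq_iff]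
    exact hmm'
  · change F _ = _
    rw [hx x, ← Term.realize_func, hF, hFx, Term.realize_func]
    simp only [hterm]
  · change Structure.RelMap r (F ∘ x) ↔ _
    have hr := hab (Relations.formula r fun i => term (x i))
    simp only [Formula.realize_rel] at hr
    rw [hFx, ← hr, ← hx]

theorem Embedding.surjective_of_forall_ne_top_not_equiv
    (hno : ∀ A : L.Substructure M, A ≠ ⊤ → ¬ Nonempty (L.Equiv A M)) (g : M ↪[L] M) :
    Function.Surjective g := by
  refine (Hom.range_eq_top (f := g.toHom)).mp ?_
  by_contra hne
  exact hno _ hne ⟨g.equivRange.symm⟩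

theorem realize_init_iff_of_realize_iff {p : Fin (n + 1) → M} {q : Fin (n + 1) → N}
    (hpq : ∀ φ : L.Formula (Fin (n + 1)), φ.Realize p ↔ φ.Realize q)
    (φ : L.Formula (Fin n)) : φ.Realize (Fin.init p) ↔ φ.Realize (Fin.init q) := by
  have h := hpq (φ.relabel Fin.castSucc)
  rw [Formula.realize_relabel, Formula.realize_relabel] at h
  exact h

theorem last_eq_realize_init_of_realize_iff {p : Fin (n + 1) → M} {q : Fin (n + 1) → N}
    (hpq : ∀ φ : L.Formula (Fin (n + 1)), φ.Realize p ↔ φ.Realize q)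
    {t : L.Term (Fin n)} (hp : t.realize (Fin.init p) = p (Fin.last n)) :
    t.realize (Fin.init q) = q (Fin.last n) := by
  have h := hpq ((t.relabel Fin.castSucc).equal (Term.var (Fin.last n)))
  simp only [Formula.realize_equal, Term.realize_relabel, Term.realize_var] at h
  exact h.mp hp

end FirstOrder.Language

/-- If a finitely generated `L`-structure `M` contains no proper substructure isomorphic
to `M` itself, then every `L`-structure isotyped with `M` is isomorphic to `M`. -/
theorem isotyped_iso_of_no_proper_self_embedding {L : FirstOrder.Language}
    {M N : Type*} [L.Structure M] [L.Structure N]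
    (hfg : Structure.FG L M)
    (hno : ∀ A : L.Substructure M, A ≠ ⊤ → ¬ Nonempty (L.Equiv A M))
    (h : Isotyped L M N) :
    Nonempty (L.Equiv M N) := by
  obtain ⟨n, a, ha⟩ :=
    Substructure.fg_iff_exists_fin_generating_family.mp (Structure.fg_def.mp hfg)
  obtain ⟨b, hb⟩ := h.1 n a
  obtain ⟨f, hf⟩ := exists_embedding_of_realize_iff ha hb
  have hsurj : Function.Surjective f := by
    intro c
    obtain ⟨p, hp⟩ := h.2 (n + 1) (Fin.snoc b c)
    have hinit := realize_init_iff_of_realize_iff hp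
    rw [Fin.init_snoc] at hinit
    obtain ⟨g, hg⟩ := exists_embedding_of_realize_iff ha fun φ => (hb φ).trans (hinit φ).symm
    obtain ⟨x, hx⟩ := Embedding.surjective_of_forall_ne_top_not_equiv hno g (p (Fin.last n))
    obtain ⟨t, rfl⟩ := exists_term_realize_eq ha x
    have hc := last_eq_realize_init_of_realize_iff hp ((hg t).symm.trans hx)
    rw [Fin.init_snoc, Fin.snoc_last] at hc
    exact ⟨t.realize a, (hf t).trans hc⟩
  exact ⟨⟨Equiv.ofBijective f ⟨f.injective, hsurj⟩, f.map_fun', f.map_rel'⟩⟩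
end

section
/- Let n ≥ 1, c ≥ 1, and let H := FreeGroup (Fin n) ⧸ lowerCentralSeries (FreeGroup (Fin n)) c be the free nilpotent group of class c and rank n, with canonical generators ē i (the images of the free generators of FreeGroup (Fin n)) and abelianization map η : H →* Abelianization H. If h : Fin n → H is a family of elements such that the images η (h i) form a ℤ-basis of the abelianization of H (which is a free abelian group of rank n), then Subgroup.closure (Set.range h) = ⊤ and there exists a group automorphism Φ of H with Φ (ē i) = h i for all i. -/
/-!
Let `φ` be the endomorphism of `H` sending `ē i` to `h i`. The `h i` generate `H` modulo its
commutator subgroup, and in a nilpotent group such a subgroup is everything (induct on the class,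
passing to `H ⧸ Z(H)`); hence `φ` is surjective.

Finitely generated nilpotent groups are Hopfian. Modulo `γ (k + 2)` the commutator map
`γ k × G → γ (k + 1)` is bimultiplicative with central values, so commutators of generators of
`γ k` modulo `γ (k + 1)` with generators of `G` generate `γ (k + 1)` modulo `γ (k + 2)`: every
factor `γ k / γ (k + 1)` is a finitely generated abelian group. A surjective endomorphism induces
surjections, hence injections, of these factors, so its kernel lies in every `γ k`.
-/

/-- The free nilpotent group of class `c` and rank `n`: the quotient of the free group
on `n` generators by the `c`-th term of its lower central series. -/
abbrev FreeNilpotentGroup (n c : ℕ) : Type :=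
  FreeGroup (Fin n) ⧸ (⊤ : Subgroup (FreeGroup (Fin n))).lowerCentralSeries c

open Subgroup
open scoped commutatorElement

section Commutators

variable {G : Type*} [Group G]

theorem mul_mul_inv_of_mem_center {z : G} (hz : z ∈ center G) (g : G) : g * z * g⁻¹ = z := by
  rw [mem_center_iff.mp hz g, mul_inv_cancel_right]

theorem commutatorElement_mul_left_of_mem_center {z : G} (hz : z ∈ center G) (a b : G) :
    ⁅a * z, b⁆ = ⁅a, b⁆ := by
  have hzb : ⁅z, b⁆ = 1 := commutatorElement_eq_one_iff_mul_comm.mpr (mem_center_iff.mp hz b).symm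
  rw [commutatorElement_mul_left_eq_conj_mul, hzb, mul_one, mul_inv_cancel, one_mul]

theorem commutatorElement_mul_right_of_mem_center {z : G} (hz : z ∈ center G) (a b : G) :
    ⁅a, b * z⁆ = ⁅a, b⁆ := by
  rw [← commutatorElement_inv, commutatorElement_mul_left_of_mem_center hz, commutatorElement_inv]

end Commutators

theorem MonoidHom.injective_of_surjective_of_fg {A : Type*} [CommGroup A] [Group.FG A]
    {f : A →* A} (hf : Function.Surjective f) : Function.Injective f :=
  OrzechProperty.injective_of_surjective_endomorphism (R := ℤ) f.toAdditive.toIntLinearMap hf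

theorem Module.Basis.closure_range_toMul_eq_top {A ι : Type*} [CommGroup A]
    (b : Module.Basis ι ℤ (Additive A)) : closure (Set.range fun i => (b i).toMul) = ⊤ := by
  apply toAddSubgroup.injective
  have hpre : Additive.toMul ⁻¹' (Set.range fun i => (b i).toMul) = Set.range b := by
    ext; simp
  rw [toAddSubgroup_closure, map_top, hpre, ← Submodule.span_int_eq_addSubgroupClosure, b.span_eq,
    Submodule.top_toAddSubgroup]

namespace Subgroup

variable {G : Type*} [Group G]

theorem map_abelianizationOf_eq_top_iff {K : Subgroup G} :
    K.map Abelianization.of = ⊤ ↔ K ⊔ _root_.commutator G = ⊤ := by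
  rw [← map_top_of_surjective Abelianization.of (QuotientGroup.mk_surjective (s := _)),
    map_eq_map_iff, Abelianization.ker_of, top_sup_eq]

theorem commutator_le_of_sup_center_eq_top {K : Subgroup G} (hK : K ⊔ center G = ⊤) :
    _root_.commutator G ≤ K := by
  rw [_root_.commutator_def, commutator_le]
  intro g₁ hg₁ g₂ hg₂
  rw [← hK, mem_sup_of_normal_right] at hg₁ hg₂
  obtain ⟨k₁, hk₁, z₁, hz₁, rfl⟩ := hg₁
  obtain ⟨k₂, hk₂, z₂, hz₂, rfl⟩ := hg₂
  rw [commutatorElement_mul_left_of_mem_center hz₁, commutatorElement_mul_right_of_mem_center hz₂]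
  exact K.mul_mem (K.mul_mem (K.mul_mem hk₁ hk₂) (K.inv_mem hk₁)) (K.inv_mem hk₂)

theorem eq_top_of_sup_commutator_eq_top [Group.IsNilpotent G] {K : Subgroup G}
    (hK : K ⊔ _root_.commutator G = ⊤) : K = ⊤ := by
  suffices ∀ K : Subgroup G, K ⊔ _root_.commutator G = ⊤ → K = ⊤ from this K hK
  refine Group.nilpotent_center_quotient_ind
    (P := fun G _ _ => ∀ K : Subgroup G, K ⊔ _root_.commutator G = ⊤ → K = ⊤) G ?_ ?_
  · intro G _ _ K _
    exact Subsingleton.elim _ _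
  · intro G _ _ ih K hK
    have hKZ : K ⊔ center G = ⊤ := by
      set π := QuotientGroup.mk' (center G)
      have hπ : π.range = ⊤ := π.range_eq_top_of_surjective (QuotientGroup.mk'_surjective _)
      have hmap : K.map π ⊔ _root_.commutator (G ⧸ center G) = ⊤ := by
        rw [_root_.commutator_def, ← hπ, ← map_commutator_eq, ← map_sup, hK,
          ← MonoidHom.range_eq_map]
      rw [← QuotientGroup.ker_mk' (center G), ← comap_map_eq, ih _ hmap, comap_top]
    rw [← hK, sup_eq_left.mpr (commutator_le_of_sup_center_eq_top hKZ)]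

theorem commutatorElement_mem_of_mem_closure_right {C : Subgroup G} {T : Set G} {a g : G}
    (hcent : ∀ g ∈ closure T, ⁅a, g⁆ ∈ center G) (hT : ∀ t ∈ T, ⁅a, t⁆ ∈ C)
    (hg : g ∈ closure T) : ⁅a, g⁆ ∈ C := by
  induction hg using closure_induction with
  | mem t ht => exact hT t ht
  | one => rw [commutatorElement_one_right]; exact C.one_mem
  | mul g g' hg hg' ih ih' =>
    rw [commutatorElement_mul_right_eq_mul_conj, mul_assoc, mul_assoc, ← mul_assoc g,
      mul_mul_inv_of_mem_center (hcent g' hg')]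
    exact C.mul_mem ih ih'
  | inv g hg ih =>
    have hconj := mul_mul_inv_of_mem_center (inv_mem (hcent g hg)) g⁻¹
    rw [inv_inv] at hconj
    rw [commutatorElement_inv_right, ← commutatorElement_inv, hconj]
    exact C.inv_mem ih

theorem commutator_closure_closure_le_of_le_center {S T : Set G}
    (h : ⁅closure S, closure T⁆ ≤ center G) :
    ⁅closure S, closure T⁆ ≤ closure (Set.image2 (⁅·, ·⁆) S T) := by
  have hswap {K : Subgroup G} {a b : G} : ⁅b, a⁆ ∈ K ↔ ⁅a, b⁆ ∈ K := by
    rw [← commutatorElement_inv, inv_mem_iff]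
  rw [commutator_le]
  intro x hx g hg
  have hcent {x g : G} (hx : x ∈ closure S) (hg : g ∈ closure T) : ⁅x, g⁆ ∈ center G :=
    h (commutator_mem_commutator hx hg)
  refine hswap.mp (commutatorElement_mem_of_mem_closure_right (fun x hx => hswap.mp (hcent hx hg))
    (fun s hs => hswap.mp ?_) hx)
  exact commutatorElement_mem_of_mem_closure_right (fun g hg => hcent (subset_closure hs) hg)
    (fun t ht => subset_closure (Set.mem_image2_of_mem hs ht)) hg

theorem map_top_lowerCentralSeries_of_surjective {G' : Type*} [Group G'] {f : G →* G'}
    (hf : Function.Surjective f) (k : ℕ) :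
    ((⊤ : Subgroup G).lowerCentralSeries k).map f = (⊤ : Subgroup G').lowerCentralSeries k := by
  rw [map_lowerCentralSeries, map_top_of_surjective f hf]

variable (G) in
theorem lowerCentralSeries_quotient_lowerCentralSeries_eq_bot (c : ℕ) :
    (⊤ : Subgroup (G ⧸ (⊤ : Subgroup G).lowerCentralSeries c)).lowerCentralSeries c = ⊥ := by
  rw [← map_top_lowerCentralSeries_of_surjective (QuotientGroup.mk'_surjective _), map_eq_bot_iff,
    QuotientGroup.ker_mk']

local notation "γ" => lowerCentralSeries (⊤ : Subgroup _)

theorem lowerCentralSeries_succ_le_closure_of_eq_bot {S T : Set G} {k : ℕ}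
    (hS : closure S ⊔ γ (k + 1) = γ k) (hT : closure T = ⊤) (hbot : γ (k + 2) = (⊥ : Subgroup G)) :
    γ (k + 1) ≤ closure (Set.image2 (⁅·, ·⁆) S T) := by
  have hcent : γ (k + 1) ≤ center G := commutator_top_right_eq_bot_iff_le_center.mp hbot
  have hSk : closure S ≤ γ k := hS ▸ le_sup_left
  calc γ (k + 1) = ⁅closure S ⊔ γ (k + 1), ⊤⁆ := by rw [hS]; rfl
    _ ≤ ⁅closure S, closure T⁆ := by
      rw [commutator_le]
      intro x hx g _
      obtain ⟨y, hy, z, hz, rfl⟩ := mem_sup_of_normal_right.mp hx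
      rw [commutatorElement_mul_left_of_mem_center (hcent hz)]
      exact commutator_mem_commutator hy (hT ▸ mem_top g)
    _ ≤ closure (Set.image2 (⁅·, ·⁆) S T) :=
      commutator_closure_closure_le_of_le_center ((commutator_mono hSk le_top).trans hcent)

theorem lowerCentralSeries_succ_le_closure_sup {S T : Set G} {k : ℕ}
    (hS : closure S ⊔ γ (k + 1) = γ k) (hT : closure T = ⊤) :
    γ (k + 1) ≤ closure (Set.image2 (⁅·, ·⁆) S T) ⊔ γ (k + 2) := by
  set π := QuotientGroup.mk' (γ (k + 2) : Subgroup G)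
  have hπ : Function.Surjective π := QuotientGroup.mk'_surjective _
  have hγ := map_top_lowerCentralSeries_of_surjective hπ
  rw [← QuotientGroup.ker_mk' (γ (k + 2) : Subgroup G), ← map_le_map_iff, hγ,
    MonoidHom.map_closure, Set.image_image2_distrib (map_commutatorElement π)]
  refine lowerCentralSeries_succ_le_closure_of_eq_bot ?_ ?_ ?_
  · rw [← MonoidHom.map_closure, ← hγ, ← hγ, ← map_sup, hS]
  · rw [← MonoidHom.map_closure, hT, map_top_of_surjective π hπ]
  · rw [← hγ, map_eq_bot_iff, QuotientGroup.ker_mk']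

theorem exists_finite_closure_sup_lowerCentralSeries_succ_eq [Group.FG G] (k : ℕ) :
    ∃ S : Set G, S.Finite ∧ closure S ⊔ γ (k + 1) = γ k := by
  obtain ⟨T, hT, hTfin⟩ := (Group.fg_iff (G := G)).mp inferInstance
  induction k with
  | zero => exact ⟨T, hTfin, by rw [hT, top_sup_eq]; rfl⟩
  | succ k ih =>
    obtain ⟨S, hSfin, hS⟩ := ih
    refine ⟨Set.image2 (⁅·, ·⁆) S T, hSfin.image2 _ hTfin, le_antisymm ?_ ?_⟩
    · refine sup_le ((closure_le _).mpr ?_) (lowerCentralSeries_antitone _ k.succ.le_succ)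
      rintro _ ⟨s, hs, t, -, rfl⟩
      exact commutator_mem_commutator (hS.le (le_sup_left (b := γ (k + 1)) (subset_closure hs)))
        (mem_top t)
    · exact lowerCentralSeries_succ_le_closure_sup hS hT

theorem disjoint_ker_of_map_eq_self {A : Subgroup G} (hAZ : A ≤ center G) (hA : A.FG)
    {f : G →* G} (hf : A.map f = A) : Disjoint f.ker A := by
  let _ : CommGroup A := { mul_comm := fun a b => Subtype.ext (mem_center_iff.mp (hAZ b.2) a) }
  have : Group.FG A := (Group.fg_iff_subgroup_fg A).mpr hA
  let fA : A →* A := (MulEquiv.subgroupCongr hf).toMonoidHom.comp (f.subgroupMap A)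
  have hfA : Function.Injective fA :=
    MonoidHom.injective_of_surjective_of_fg
      ((MulEquiv.subgroupCongr hf).surjective.comp (f.subgroupMap_surjective A))
  refine disjoint_def.mpr fun {x} hx hxA => ?_
  have : fA ⟨x, hxA⟩ = fA 1 := Subtype.ext (by simpa [fA] using hx)
  exact congrArg Subtype.val (hfA this)

theorem ker_le_lowerCentralSeries_succ [Group.FG G] {φ : G →* G} (hφ : Function.Surjective φ)
    {k : ℕ} (hk : φ.ker ≤ γ k) : φ.ker ≤ γ (k + 1) := by
  obtain ⟨S, hSfin, hS⟩ := exists_finite_closure_sup_lowerCentralSeries_succ_eq (G := G) k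
  set N : Subgroup G := γ (k + 1)
  set π := QuotientGroup.mk' N
  have hπ : Function.Surjective π := QuotientGroup.mk'_surjective N
  have hφN : N ≤ N.comap φ :=
    map_le_iff_le_comap.mp (map_top_lowerCentralSeries_of_surjective hφ _).le
  set φ' := QuotientGroup.map N N φ hφN
  have hAZ : (γ k : Subgroup G).map π ≤ center (G ⧸ N) := by
    rw [← commutator_top_right_eq_bot_iff_le_center, ← map_top_of_surjective π hπ,
      ← map_commutator, map_eq_bot_iff, QuotientGroup.ker_mk']
    rfl
  have hAfg : ((γ k : Subgroup G).map π).FG := by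
    have hAS : (γ k : Subgroup G).map π = closure (π '' S) := by
      rw [← MonoidHom.map_closure, ← hS, map_sup,
        (map_eq_bot_iff _).mpr (QuotientGroup.ker_mk' N).ge, sup_bot_eq]
    exact (fg_iff _).mpr ⟨_, hAS.symm, hSfin.image π⟩
  have hA : ((γ k : Subgroup G).map π).map φ' = (γ k : Subgroup G).map π := by
    rw [map_map, show φ'.comp π = π.comp φ from MonoidHom.ext fun _ => rfl, ← map_map,
      map_top_lowerCentralSeries_of_surjective hφ]
  intro x hx
  have hπx : π x = 1 :=
    disjoint_def.mp (disjoint_ker_of_map_eq_self hAZ hAfg hA)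
      (by simp [φ', π, MonoidHom.mem_ker.mp hx]) (mem_map_of_mem π (hk hx))
  rwa [QuotientGroup.mk'_apply, QuotientGroup.eq_one_iff] at hπx

end Subgroup

theorem MonoidHom.injective_of_surjective_of_isNilpotent {G : Type*} [Group G] [Group.FG G]
    [Group.IsNilpotent G] {φ : G →* G} (hφ : Function.Surjective φ) : Function.Injective φ := by
  obtain ⟨c, hc⟩ := Subgroup.nilpotent_iff_lowerCentralSeries.mp ‹Group.IsNilpotent G›
  have hker (k : ℕ) : φ.ker ≤ (⊤ : Subgroup G).lowerCentralSeries k := by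
    induction k with
    | zero => exact le_top
    | succ k ih => exact ker_le_lowerCentralSeries_succ hφ ih
  rw [← φ.ker_eq_bot_iff, ← le_bot_iff, ← hc]
  exact hker c

namespace FreeNilpotentGroup

variable {n c : ℕ}

theorem lowerCentralSeries_eq_bot :
    (⊤ : Subgroup (FreeNilpotentGroup n c)).lowerCentralSeries c = ⊥ :=
  lowerCentralSeries_quotient_lowerCentralSeries_eq_bot _ c

instance : Group.IsNilpotent (FreeNilpotentGroup n c) :=
  Subgroup.nilpotent_iff_lowerCentralSeries.mpr ⟨c, lowerCentralSeries_eq_bot⟩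

def lift {G : Type*} [Group G] (hG : (⊤ : Subgroup G).lowerCentralSeries c = ⊥) (f : Fin n → G) :
    FreeNilpotentGroup n c →* G :=
  QuotientGroup.lift _ (FreeGroup.lift f) <| by
    rw [← MonoidHom.comap_bot, ← map_le_iff_le_comap, map_lowerCentralSeries, ← hG]
    exact lowerCentralSeries_mono c le_top

theorem lift_mk_of {G : Type*} [Group G] (hG : (⊤ : Subgroup G).lowerCentralSeries c = ⊥)
    (f : Fin n → G) (i : Fin n) : lift hG f (QuotientGroup.mk (FreeGroup.of i)) = f i :=
  FreeGroup.lift_apply_of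

end FreeNilpotentGroup

theorem basis_in_abelianization_gives_automorphism_general {n c : ℕ}
    (h : Fin n → FreeNilpotentGroup n c)
    (bs : Module.Basis (Fin n) ℤ (Additive (Abelianization (FreeNilpotentGroup n c))))
    (hbs : ∀ i, bs i = Additive.ofMul (Abelianization.of (h i))) :
    Subgroup.closure (Set.range h) = ⊤ ∧
      ∃ Φ : FreeNilpotentGroup n c ≃* FreeNilpotentGroup n c,
        ∀ i, Φ (QuotientGroup.mk (FreeGroup.of i)) = h i := by
  have hbot := FreeNilpotentGroup.lowerCentralSeries_eq_bot (n := n) (c := c)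
  have hgen : closure (Set.range h) = ⊤ := by
    refine eq_top_of_sup_commutator_eq_top (map_abelianizationOf_eq_top_iff.mp ?_)
    have hbs' : Abelianization.of ∘ h = fun i => (bs i).toMul := funext fun i => by simp [hbs]
    rw [MonoidHom.map_closure, ← Set.range_comp, hbs', bs.closure_range_toMul_eq_top]
  let φ := FreeNilpotentGroup.lift hbot h
  have hφ : Function.Surjective φ := by
    rw [← MonoidHom.range_eq_top, eq_top_iff, ← hgen, closure_le]
    rintro _ ⟨i, rfl⟩
    exact ⟨_, FreeNilpotentGroup.lift_mk_of hbot h i⟩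
  exact ⟨hgen, MulEquiv.ofBijective φ ⟨φ.injective_of_surjective_of_isNilpotent hφ, hφ⟩,
    FreeNilpotentGroup.lift_mk_of hbot h⟩

/-- If the images in the abelianization of a family `h` of `n` elements of the free
nilpotent group `H` of class `c` and rank `n` form a `ℤ`-basis of the abelianization,
then `h` generates `H` and there is an automorphism of `H` carrying the canonical
generators to the `h i`. -/
theorem basis_in_abelianization_gives_automorphism {n c : ℕ} (hn : 1 ≤ n) (hc : 1 ≤ c)
    (h : Fin n → FreeNilpotentGroup n c)
    (bs : Module.Basis (Fin n) ℤ (Additive (Abelianization (FreeNilpotentGroup n c))))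
    (hbs : ∀ i, bs i = Additive.ofMul (Abelianization.of (h i))) :
    Subgroup.closure (Set.range h) = ⊤ ∧
      ∃ Φ : FreeNilpotentGroup n c ≃* FreeNilpotentGroup n c,
        ∀ i, Φ (QuotientGroup.mk (FreeGroup.of i)) = h i :=
  basis_in_abelianization_gives_automorphism_general h bs hbs
end
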